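/- arXiv:2110.09578 — 3 statements merged into one kernel-verified Lean document; each statement's English description precedes it below -/
import Mathlib

section
/- Let A be an affine region and let a, b ∈ ℝⁿ be such that: (1) a ∈ A and a + b ∈ A; (2) all nonzero components of a and of b have indices in a single tie class J of A; (3) for some index i₀ ∈ J, the components a_{i₀} and (a+b)_{i₀} have strictly opposite signs. Then there exists γ with 0 ≤ γ ≤ 1 such that a = −γ·b. -/
/-!
The affine region `A` is convex, so the whole segment from `a` to `a + b` lies in `A`. Since the
`i₀`-th coordinate changes sign along it, some point `a + γ • b` with `γ ∈ [0, 1]` has vanishing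
`i₀`-th coordinate. Coordinates tied to `i₀` vanish together with it, so `a + γ • b` is zero on
the tie class `J`; outside `J` both `a` and `b` vanish anyway.
-/

open Set

theorem convex_affineRegion {ι E : Type*} [Fintype ι] [AddCommGroup E] [Module ℝ E]
    (v : ι → E) (c : E) :
    Convex ℝ {x | ∃ α : ι → ℝ, (∀ j, |α j| ≤ 1) ∧ x = ∑ j, α j • v j + c} := by
  have hcube : Convex ℝ (univ.pi fun _ : ι => Icc (-1 : ℝ) 1) :=
    convex_pi fun _ _ => convex_Icc _ _
  convert (hcube.linear_image (Fintype.linearCombination ℝ v)).translate c using 1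
  ext x
  constructor
  · rintro ⟨α, hα, rfl⟩
    exact ⟨_, ⟨α, fun j _ => abs_le.1 (hα j), rfl⟩,
      by simp [Fintype.linearCombination_apply, add_comm]⟩
  · rintro ⟨_, ⟨α, hα, rfl⟩, rfl⟩
    exact ⟨α, fun j => abs_le.2 (hα j (mem_univ j)),
      by simp [Fintype.linearCombination_apply, add_comm]⟩

theorem exists_mem_Icc_add_mul_eq_zero {p q : ℝ} (h : (0 < p ∧ p + q < 0) ∨ (p < 0 ∧ 0 < p + q)) :
    ∃ t ∈ Icc (0 : ℝ) 1, p + t * q = 0 := by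
  have hq : q ≠ 0 := by rintro rfl; grind
  refine ⟨-p / q, ?_, by field_simp; ring⟩
  rcases h with ⟨hp, hpq⟩ | ⟨hp, hpq⟩
  · have hq : q < 0 := by linarith
    constructor
    · exact div_nonneg_of_nonpos (by linarith) hq.le
    · rw [div_le_one_of_neg hq]; linarith
  · have hq : 0 < q := by linarith
    constructor
    · exact div_nonneg (by linarith) hq.le
    · rw [div_le_one hq]; linarith

theorem eq_zero_iff_eq_zero_of_sameSign {p q : ℝ}
    (h : (p > 0 ∧ q > 0) ∨ (p < 0 ∧ q < 0) ∨ (p = 0 ∧ q = 0)) : p = 0 ↔ q = 0 := by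
  rcases h with ⟨hp, hq⟩ | ⟨hp, hq⟩ | ⟨hp, hq⟩ <;> grind

theorem apply_eq_zero_of_tied_of_tied {ι : Type*} {A : Set (ι → ℝ)} {tied : ι → ι → Prop}
    (htied : ∀ i₁ i₂, tied i₁ i₂ → ∀ x ∈ A,
      (x i₁ > 0 ∧ x i₂ > 0) ∨ (x i₁ < 0 ∧ x i₂ < 0) ∨ (x i₁ = 0 ∧ x i₂ = 0))
    {i i₀ i' : ι} (hi₀ : tied i i₀) (hi' : tied i i')
    {x : ι → ℝ} (hx : x ∈ A) (hx₀ : x i₀ = 0) : x i' = 0 :=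
  (eq_zero_iff_eq_zero_of_sameSign (htied i i' hi' x hx)).1
    ((eq_zero_iff_eq_zero_of_sameSign (htied i i₀ hi₀ x hx)).2 hx₀)

theorem stmt_5 (n k : ℕ) (v : Fin k → Fin n → ℝ) (c : Fin n → ℝ)
    (A : Set (Fin n → ℝ))
    (hA : A = {x | ∃ α : Fin k → ℝ, (∀ j, |α j| ≤ 1) ∧ x = (∑ j, α j • v j) + c})
    (tied : Fin n → Fin n → Prop)
    (htied : ∀ i₁ i₂, tied i₁ i₂ ↔ ∀ x ∈ A,
      (x i₁ > 0 ∧ x i₂ > 0) ∨ (x i₁ < 0 ∧ x i₂ < 0) ∨ (x i₁ = 0 ∧ x i₂ = 0))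
    (J : Set (Fin n)) (hJ : ∃ i, J = {i' | tied i i'})
    (a b : Fin n → ℝ) (ha : a ∈ A) (hab : a + b ∈ A)
    (hsa : ∀ i, a i ≠ 0 → i ∈ J) (hsb : ∀ i, b i ≠ 0 → i ∈ J)
    (i₀ : Fin n) (hi₀ : i₀ ∈ J)
    (hsign : (a i₀ > 0 ∧ (a + b) i₀ < 0) ∨ (a i₀ < 0 ∧ (a + b) i₀ > 0)) :
    ∃ γ : ℝ, 0 ≤ γ ∧ γ ≤ 1 ∧ a = -(γ • b) := by
  obtain ⟨i, rfl⟩ := hJ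
  obtain ⟨γ, hγ, hzero⟩ := exists_mem_Icc_add_mul_eq_zero hsign
  have hmem : a + γ • b ∈ A := by
    subst hA
    exact (convex_affineRegion v c).add_smul_mem ha hab hγ
  refine ⟨γ, hγ.1, hγ.2, eq_neg_of_add_eq_zero_left (funext fun i' => ?_)⟩
  by_cases hi' : i' ∈ {i' | tied i i'}
  · exact apply_eq_zero_of_tied_of_tied (fun i₁ i₂ => (htied i₁ i₂).1) hi₀ hi' hmem hzero
  · simp [not_imp_comm.1 (hsa i') hi', not_imp_comm.1 (hsb i') hi']
end

section
/- Let x ∈ A with x = ∑ᵢ αᵢ vᵢ + c, |αᵢ| ≤ 1. For each tie class j of A, let v'^j_i be the vector obtained from vᵢ by zeroing all components outside tie class j, and similarly let c_j be c restricted to class j. Then there exist scalars α'^j_i ∈ {αᵢ, 0} and β_j ∈ {0,1} such that ReLU(x) = ∑_{i,j} α'^j_i v'^j_i + ∑_j β_j c_j; moreover the components of ReLU(x) with indices in tie class j are all zero iff all α'^j_i and β_j are zero. -/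
/-!
Tied coordinates share the sign of every point of `A`, in particular of `x`, so on each tie
class `S` either all of `x` is positive or none of it is. Hence `ReLU x` agrees on `S` with
`β_S • x`, where `β_S ∈ {0, 1}` records whether `x` is positive somewhere on `S`, and expanding
`x = ∑ αᵢ vᵢ + c` on each class gives the decomposition with `α'ᵢ_S = β_S αᵢ`.
-/

lemma sameSign_iff_sign_eq {a b : ℝ} :
    (a > 0 ∧ b > 0) ∨ (a < 0 ∧ b < 0) ∨ (a = 0 ∧ b = 0) ↔ SignType.sign a = SignType.sign b := by
  constructor
  · rintro (⟨ha, hb⟩ | ⟨ha, hb⟩ | ⟨rfl, rfl⟩)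
    · rw [sign_pos ha, sign_pos hb]
    · rw [sign_neg ha, sign_neg hb]
    · rfl
  · intro h
    rcases lt_trichotomy a 0 with ha | rfl | ha
    · rw [sign_neg ha, eq_comm, sign_eq_neg_one_iff] at h
      exact Or.inr (Or.inl ⟨ha, h⟩)
    · rw [sign_zero, eq_comm, sign_eq_zero_iff] at h
      exact Or.inr (Or.inr ⟨rfl, h⟩)
    · rw [sign_pos ha, eq_comm, sign_eq_one_iff] at h
      exact Or.inl ⟨ha, h⟩

lemma equivalence_of_iff_forall_sign_eq {ι : Type*} {A : Set (ι → ℝ)} {r : ι → ι → Prop}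
    (hr : ∀ i j, r i j ↔ ∀ x ∈ A, SignType.sign (x i) = SignType.sign (x j)) :
    Equivalence r where
  refl i := (hr i i).2 fun _ _ ↦ rfl
  symm h := (hr _ _).2 fun x hx ↦ ((hr _ _).1 h x hx).symm
  trans h₁ h₂ := (hr _ _).2 fun x hx ↦ ((hr _ _).1 h₁ x hx).trans ((hr _ _).1 h₂ x hx)

section Classes

variable {ι : Type*} {r : ι → ι → Prop} {classes : Finset (Set ι)}

lemma eq_setOf_of_mem_classes (hr : Equivalence r)
    (hclasses : ∀ S, S ∈ classes ↔ ∃ i, S = {j | r i j}) {S : Set ι} {l : ι}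
    (hS : S ∈ classes) (hl : l ∈ S) : S = {j | r l j} := by
  obtain ⟨i, rfl⟩ := (hclasses S).1 hS
  ext j
  exact ⟨fun hj ↦ hr.trans (hr.symm hl) hj, fun hj ↦ hr.trans hl hj⟩

lemma sum_smul_indicator_apply_of_classes (hr : Equivalence r)
    (hclasses : ∀ S, S ∈ classes ↔ ∃ i, S = {j | r i j}) (w : Set ι → ℝ) (f : ι → ℝ) (l : ι) :
    (∑ S ∈ classes, w S • S.indicator f) l = w {j | r l j} * f l := by
  have hmem : {j | r l j} ∈ classes := (hclasses _).2 ⟨l, rfl⟩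
  rw [Finset.sum_apply, Finset.sum_eq_single_of_mem _ hmem]
  · simp [Set.indicator_of_mem (show l ∈ {j | r l j} from hr.refl l)]
  · intro S hS hne
    have hl : l ∉ S := fun hl ↦ hne (eq_setOf_of_mem_classes hr hclasses hS hl)
    simp [Set.indicator_of_notMem hl]

end Classes

lemma indicator_sum_smul_add {ι κ : Type*} [Fintype κ] (S : Set ι) (a : κ → ℝ)
    (v : κ → ι → ℝ) (c : ι → ℝ) :
    S.indicator (∑ i, a i • v i + c) = ∑ i, a i • S.indicator (v i) + S.indicator c := by
  ext l
  by_cases hl : l ∈ S <;> simp [hl, Finset.sum_apply]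

section Activation

variable {ι : Type*} (x : ι → ℝ)

open Classical in
noncomputable def activation (S : Set ι) : ℝ := if ∃ l ∈ S, 0 < x l then 1 else 0

lemma activation_eq_zero_or_one (S : Set ι) : activation x S = 0 ∨ activation x S = 1 := by
  unfold activation; split_ifs <;> simp

lemma activation_eq_zero_iff {S : Set ι} : activation x S = 0 ↔ ∀ l ∈ S, max (x l) 0 = 0 := by
  simp [activation]

lemma max_eq_activation_mul {S : Set ι}
    (hS : ∀ l ∈ S, ∀ l' ∈ S, SignType.sign (x l) = SignType.sign (x l')) {l : ι} (hl : l ∈ S) :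
    max (x l) 0 = activation x S * x l := by
  unfold activation
  split_ifs with h
  · obtain ⟨l', hl', hpos⟩ := h
    have : 0 < x l := sign_eq_one_iff.1 ((hS l hl l' hl').trans (sign_pos hpos))
    simp [this.le]
  · push Not at h
    simp [h l hl]

end Activation

theorem stmt_7 (n k : ℕ) (v : Fin k → Fin n → ℝ) (c : Fin n → ℝ)
    (A : Set (Fin n → ℝ))
    (hA : A = {x | ∃ α : Fin k → ℝ, (∀ i, |α i| ≤ 1) ∧ x = (∑ i, α i • v i) + c})
    (tied : Fin n → Fin n → Prop)
    (htied : ∀ i₁ i₂, tied i₁ i₂ ↔ ∀ x ∈ A,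
      (x i₁ > 0 ∧ x i₂ > 0) ∨ (x i₁ < 0 ∧ x i₂ < 0) ∨ (x i₁ = 0 ∧ x i₂ = 0))
    (classes : Finset (Set (Fin n)))
    (hclasses : ∀ S : Set (Fin n), S ∈ classes ↔ ∃ i : Fin n, S = {i' | tied i i'})
    (α : Fin k → ℝ) (hα : ∀ i, |α i| ≤ 1)
    (x : Fin n → ℝ) (hx : x = (∑ i, α i • v i) + c) :
    ∃ (α' : Fin k → Set (Fin n) → ℝ) (β : Set (Fin n) → ℝ),
      (∀ i S, α' i S = α i ∨ α' i S = 0) ∧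
      (∀ S, β S = 0 ∨ β S = 1) ∧
      (fun l => max (x l) 0) =
        (∑ S ∈ classes, ((∑ i, α' i S • S.indicator (v i)) + β S • S.indicator c)) ∧
      (∀ S ∈ classes,
        ((∀ l ∈ S, max (x l) 0 = 0) ↔ ((∀ i, α' i S = 0) ∧ β S = 0))) := by
  have hxA : x ∈ A := hA ▸ ⟨α, hα, hx⟩
  have htied_sign : ∀ i j, tied i j ↔ ∀ y ∈ A, SignType.sign (y i) = SignType.sign (y j) := by
    simpa only [sameSign_iff_sign_eq] using htied
  have hequiv := equivalence_of_iff_forall_sign_eq htied_sign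
  have hsign : ∀ l l', tied l l' → SignType.sign (x l) = SignType.sign (x l') :=
    fun l l' h ↦ (htied_sign l l').1 h x hxA
  refine ⟨fun i S ↦ activation x S * α i, activation x, fun i S ↦ ?_,
    activation_eq_zero_or_one x, ?_, fun S _ ↦ ?_⟩
  · rcases activation_eq_zero_or_one x S with h | h <;> simp [h]
  · have hsummand : ∀ S : Set (Fin n), ∑ i, (activation x S * α i) • S.indicator (v i) +
        activation x S • S.indicator c = activation x S • S.indicator x := by
      intro S
      rw [hx, indicator_sum_smul_add, smul_add, Finset.smul_sum]
      simp only [mul_smul]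
    simp_rw [hsummand]
    funext l
    rw [sum_smul_indicator_apply_of_classes hequiv hclasses]
    have hclass_sign : ∀ l₁ ∈ {j | tied l j}, ∀ l₂ ∈ {j | tied l j},
        SignType.sign (x l₁) = SignType.sign (x l₂) :=
      fun l₁ h₁ l₂ h₂ ↦ hsign _ _ (hequiv.trans (hequiv.symm h₁) h₂)
    exact max_eq_activation_mul x hclass_sign (hequiv.refl l)
  · rw [← activation_eq_zero_iff]
    constructor
    · intro h; simp [h]
    · exact And.right
end

section
/- Let x = ∑ᵢ αᵢ vᵢ + c with |αᵢ| ≤ 1 be in the affine region A. Then there exist scalars α'^j_i with |α'^j_i| ≤ 1 for all i and all tie classes j, such that ReLU(x) = ∑_{i,j} α'^j_i v'^j_i + ReLU(c), where v'^j_i is vᵢ with all components outside tie class j set to zero. In other words, the affine region with basis vectors {v'^j_i} and center ReLU(c) over-approximates the ReLU image of A. -/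
/-!
Along the segment `t ↦ c + t • (x - c)`, `t ∈ [0, 1]`, which lies in `A`, two tied coordinates
have the same sign at every time, so they are both nonnegative, both nonpositive, or cross zero at
the same time. In each case ReLU changes them by the same factor: `ReLU(x)ₗ - ReLU(c)ₗ = ρ (xₗ - cₗ)`
with `|ρ| ≤ 1` depending only on the tie class of `l`, and `α'ⁱ_S = ρ_S αᵢ` works since
`x - c = ∑ αᵢ vᵢ`.
-/

open Set SignType

theorem sign_eq_sign_iff {α : Type*} [Zero α] [LinearOrder α] {p q : α} :
    sign p = sign q ↔ (0 < p ∧ 0 < q) ∨ (p < 0 ∧ q < 0) ∨ (p = 0 ∧ q = 0) := by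
  rcases lt_trichotomy p 0 with hp | rfl | hp
  · rw [sign_neg hp, eq_comm, sign_eq_neg_one_iff]; simp [hp, hp.not_gt, hp.ne]
  · rw [sign_zero, eq_comm, sign_eq_zero_iff]; simp
  · rw [sign_pos hp, eq_comm, sign_eq_one_iff]; simp [hp, hp.not_gt, hp.ne']

theorem mul_eq_mul_of_sign_eq_on_segment {a b a' b' : ℝ} (hab : a * b ≤ 0)
    (h : ∀ t ∈ Icc (0 : ℝ) 1, sign (a + t * (b - a)) = sign (a' + t * (b' - a'))) :
    a * b' = a' * b := by
  rcases eq_or_ne a b with rfl | hne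
  · obtain rfl : a = 0 := mul_self_eq_zero.1 (le_antisymm hab (mul_self_nonneg a))
    simp
  have hsub : a - b ≠ 0 := sub_ne_zero.2 hne
  -- `t` is the crossing time `a / (a - b)` of the first function, which lies in `[0, 1]`;
  -- the second function must vanish there too.
  have hsq : 0 < (a - b) ^ 2 := by positivity
  set t := a * (a - b) / (a - b) ^ 2 with ht
  have ht01 : t ∈ Icc (0 : ℝ) 1 :=
    ⟨div_nonneg (by nlinarith) hsq.le, (div_le_one hsq).2 (by nlinarith)⟩
  have hzero : a + t * (b - a) = 0 := by rw [ht]; field_simp; ring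
  have hzero' : a' + t * (b' - a') = 0 := by
    rw [← sign_eq_zero_iff, ← h t ht01, hzero, sign_zero]
  rw [ht] at hzero'
  field_simp at hzero'
  linear_combination hzero'

theorem max_zero_sub_mul_eq_of_sign_eq_on_segment {a b a' b' : ℝ}
    (h : ∀ t ∈ Icc (0 : ℝ) 1, sign (a + t * (b - a)) = sign (a' + t * (b' - a'))) :
    (max b 0 - max a 0) * (b' - a') = (max b' 0 - max a' 0) * (b - a) := by
  have ha : sign a = sign a' := by simpa using h 0 (by simp)
  have hb : sign b = sign b' := by simpa using h 1 (by simp)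
  have hcross (hab : a * b ≤ 0) := mul_eq_mul_of_sign_eq_on_segment hab h
  rcases le_total 0 a with ha0 | ha0 <;> rcases le_total 0 b with hb0 | hb0
  · have : 0 ≤ a' := sign_nonneg_iff.1 (ha ▸ sign_nonneg_iff.2 ha0)
    have : 0 ≤ b' := sign_nonneg_iff.1 (hb ▸ sign_nonneg_iff.2 hb0)
    simp only [max_eq_left, *]; ring
  · have : 0 ≤ a' := sign_nonneg_iff.1 (ha ▸ sign_nonneg_iff.2 ha0)
    have : b' ≤ 0 := sign_nonpos_iff.1 (hb ▸ sign_nonpos_iff.2 hb0)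
    simp only [max_eq_left, max_eq_right, *]
    linear_combination -hcross (mul_nonpos_of_nonneg_of_nonpos ha0 hb0)
  · have : a' ≤ 0 := sign_nonpos_iff.1 (ha ▸ sign_nonpos_iff.2 ha0)
    have : 0 ≤ b' := sign_nonneg_iff.1 (hb ▸ sign_nonneg_iff.2 hb0)
    simp only [max_eq_left, max_eq_right, *]
    linear_combination hcross (mul_nonpos_of_nonpos_of_nonneg ha0 hb0)
  · have : a' ≤ 0 := sign_nonpos_iff.1 (ha ▸ sign_nonpos_iff.2 ha0)
    have : b' ≤ 0 := sign_nonpos_iff.1 (hb ▸ sign_nonpos_iff.2 hb0)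
    simp only [max_eq_right, *]; ring

theorem exists_abs_le_one_forall_eq_mul {ι : Type*} {S : Set ι} {f g : ι → ℝ}
    (hle : ∀ j ∈ S, |f j| ≤ |g j|) (hcross : ∀ j ∈ S, ∀ l ∈ S, f j * g l = f l * g j) :
    ∃ ρ : ℝ, |ρ| ≤ 1 ∧ ∀ l ∈ S, f l = ρ * g l := by
  by_cases hg : ∃ j ∈ S, g j ≠ 0
  · obtain ⟨j, hj, hgj⟩ := hg
    refine ⟨f j / g j, ?_, fun l hl => ?_⟩
    · rw [abs_div, div_le_one (abs_pos.2 hgj)]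
      exact hle j hj
    · rw [div_mul_eq_mul_div, hcross j hj l hl, mul_div_cancel_right₀ _ hgj]
  · push Not at hg
    refine ⟨0, by simp, fun l hl => ?_⟩
    simpa [hg l hl] using hle l hl

theorem Finset.sum_indicator_apply_eq_of_unique_mem {ι M : Type*} [AddCommMonoid M]
    {s : Finset (Set ι)} {S : Set ι} {l : ι} (f : Set ι → ι → M) (hS : S ∈ s) (hl : l ∈ S)
    (huniq : ∀ T ∈ s, l ∈ T → T = S) : ∑ T ∈ s, T.indicator (f T) l = f S l := by
  rw [Finset.sum_eq_single_of_mem S hS fun T hT hTS => ?_, indicator_of_mem hl]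
  exact indicator_of_notMem (fun hlT => hTS (huniq T hT hlT)) _

theorem Equivalence.of_iff_forall_eq {ι β γ : Type*} {r : ι → ι → Prop} {A : Set β}
    {F : β → ι → γ} (h : ∀ i j, r i j ↔ ∀ y ∈ A, F y i = F y j) : Equivalence r where
  refl i := (h i i).2 fun _ _ => rfl
  symm hij := (h _ _).2 fun y hy => ((h _ _).1 hij y hy).symm
  trans hij hjk := (h _ _).2 fun y hy => ((h _ _).1 hij y hy).trans ((h _ _).1 hjk y hy)

theorem exists_abs_le_one_eq_sum_indicator_smul {ι : Type*} {r : ι → ι → Prop}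
    (hr : Equivalence r) {classes : Finset (Set ι)}
    (hclasses : ∀ S, S ∈ classes ↔ ∃ i, S = {j | r i j}) {f g : ι → ℝ}
    (hle : ∀ l, |f l| ≤ |g l|) (hcross : ∀ j l, r j l → f j * g l = f l * g j) :
    ∃ ρ : Set ι → ℝ, (∀ S, |ρ S| ≤ 1) ∧ f = ∑ S ∈ classes, S.indicator (ρ S • g) := by
  have hρ (S : Set ι) : ∃ ρ : ℝ, |ρ| ≤ 1 ∧ (S ∈ classes → ∀ l ∈ S, f l = ρ * g l) := by
    by_cases hS : S ∈ classes
    · obtain ⟨i, rfl⟩ := (hclasses S).1 hS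
      obtain ⟨ρ, hρ1, hρ⟩ := exists_abs_le_one_forall_eq_mul (fun l _ => hle l)
        fun j hj l hl => hcross j l (hr.trans (hr.symm hj) hl)
      exact ⟨ρ, hρ1, fun _ => hρ⟩
    · exact ⟨0, by simp, fun h => absurd h hS⟩
  choose ρ hρ1 hρ using hρ
  refine ⟨ρ, hρ1, funext fun l => ?_⟩
  have hl : l ∈ {j | r l j} := hr.refl l
  have hclass := (hclasses {j | r l j}).2 ⟨l, rfl⟩
  have huniq : ∀ T ∈ classes, l ∈ T → T = {j | r l j} := by
    rintro T hT hlT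
    obtain ⟨i, rfl⟩ := (hclasses T).1 hT
    ext j
    exact ⟨fun h => hr.trans (hr.symm hlT) h, fun h => hr.trans hlT h⟩
  rw [Finset.sum_apply, Finset.sum_indicator_apply_eq_of_unique_mem _ hclass hl huniq,
    Pi.smul_apply, smul_eq_mul, hρ _ hclass l hl]

def zonotope {ι E : Type*} [Fintype ι] [AddCommGroup E] [Module ℝ E] (v : ι → E) (c : E) :
    Set E :=
  {x | ∃ α : ι → ℝ, (∀ i, |α i| ≤ 1) ∧ x = ∑ i, α i • v i + c}

theorem add_smul_sub_mem_zonotope {ι E : Type*} [Fintype ι] [AddCommGroup E] [Module ℝ E]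
    {v : ι → E} {c x : E} (hx : x ∈ zonotope v c) {t : ℝ} (ht : t ∈ Icc (0 : ℝ) 1) :
    c + t • (x - c) ∈ zonotope v c := by
  obtain ⟨α, hα, rfl⟩ := hx
  refine ⟨fun i => t * α i, fun i => ?_, ?_⟩
  · rw [abs_mul, abs_of_nonneg ht.1]
    exact mul_le_one₀ ht.2 (abs_nonneg _) (hα i)
  · simp only [add_sub_cancel_right, Finset.smul_sum, mul_smul, add_comm c]

theorem stmt_8 (n k : ℕ) (v : Fin k → Fin n → ℝ) (c : Fin n → ℝ)
    (A : Set (Fin n → ℝ))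
    (hA : A = {x | ∃ α : Fin k → ℝ, (∀ i, |α i| ≤ 1) ∧ x = (∑ i, α i • v i) + c})
    (tied : Fin n → Fin n → Prop)
    (htied : ∀ i₁ i₂, tied i₁ i₂ ↔ ∀ x ∈ A,
      (x i₁ > 0 ∧ x i₂ > 0) ∨ (x i₁ < 0 ∧ x i₂ < 0) ∨ (x i₁ = 0 ∧ x i₂ = 0))
    (classes : Finset (Set (Fin n)))
    (hclasses : ∀ S : Set (Fin n), S ∈ classes ↔ ∃ i : Fin n, S = {i' | tied i i'})
    (α : Fin k → ℝ) (hα : ∀ i, |α i| ≤ 1)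
    (x : Fin n → ℝ) (hx : x = (∑ i, α i • v i) + c) :
    ∃ α' : Fin k → Set (Fin n) → ℝ,
      (∀ i S, |α' i S| ≤ 1) ∧
      (fun l => max (x l) 0) =
        (∑ S ∈ classes, ∑ i, α' i S • S.indicator (v i)) + (fun l => max (c l) 0) := by
  have htied' (i₁ i₂ : Fin n) : tied i₁ i₂ ↔ ∀ y ∈ A, sign (y i₁) = sign (y i₂) := by
    simp only [htied, gt_iff_lt, sign_eq_sign_iff]
  have hseg (t : ℝ) (ht : t ∈ Icc (0 : ℝ) 1) : c + t • (x - c) ∈ A :=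
    hA ▸ add_smul_sub_mem_zonotope ⟨α, hα, hx⟩ ht
  obtain ⟨ρ, hρ1, hρ⟩ := exists_abs_le_one_eq_sum_indicator_smul
    (Equivalence.of_iff_forall_eq htied') hclasses
    (f := fun l => max (x l) 0 - max (c l) 0) (g := x - c)
    (fun l => abs_max_sub_max_le_abs (x l) (c l) 0)
    fun j l hjl => max_zero_sub_mul_eq_of_sign_eq_on_segment fun t ht => by
      simpa using (htied' j l).1 hjl _ (hseg t ht)
  refine ⟨fun i S => ρ S * α i, fun i S => ?_, ?_⟩
  · rw [abs_mul]
    exact mul_le_one₀ (hρ1 S) (abs_nonneg _) (hα i)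
  have hterm (S : Set (Fin n)) :
      ∑ i, (ρ S * α i) • S.indicator (v i) = S.indicator (ρ S • (x - c)) := by
    ext l
    by_cases hl : l ∈ S <;> simp [hl, hx, Finset.mul_sum, mul_assoc]
  simp only [hterm, ← hρ]
  ext l
  simp
end
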